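/- arXiv:1603.05945 — 6 statements merged into one kernel-verified Lean document; each statement's English description precedes it below -/
import Mathlib

section
/- Let P be a non-degenerate block-hereditary class of graphs, let d ≥ 2 be an integer, and let G be a graph. Suppose G contains no induced 2-connected subgraph on more than d and at most 2d − 2 vertices, and G contains no induced subgraph that is biconnected, has between 2 and d vertices, and is not in P. Then any two distinct (P ∩ B_{2,d})-clusters of G share at most one vertex, where B_{2,d} is the class of biconnected graphs with at least 2 and at most d vertices. -/
/-!
Two biconnected sets sharing two vertices have a biconnected union: deleting any vertex
leaves both parts connected and still meeting. So if two clusters `H₁ ≠ H₂` met in two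
vertices, `H₁ ∪ H₂` would be biconnected on at most `2d - 2` vertices; since sizes in
`(d, 2d - 2]` are excluded, it has at most `d` vertices, so it lies in `𝒫 ∩ B_{2,d}` and
contradicts the maximality of the clusters.
-/

open SimpleGraph

def PreconnOn {V : Type} (G : SimpleGraph V) (B : Set V) : Prop :=
  (G.induce B).Preconnected

def ConnOn {V : Type} (G : SimpleGraph V) (B : Set V) : Prop :=
  (G.induce B).Connected

/-- `G[B]` is biconnected: connected with no cut vertex. -/
def BiconnOn {V : Type} (G : SimpleGraph V) (B : Set V) : Prop :=
  ConnOn G B ∧ ∀ v ∈ B, PreconnOn G (B \ {v})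

/-- A `Q`-cluster of `G` (where `Q B` means "`G[B]` is isomorphic to a member of the
class `Q`"): a maximal vertex set inducing `K₁` or a member of `Q`. -/
def IsCluster {V : Type} (Q : Set V → Prop) (H : Set V) : Prop :=
  ((∃ v : V, H = {v}) ∨ Q H) ∧
    ∀ H' : Set V, H ⊆ H' → ((∃ v : V, H' = {v}) ∨ Q H') → H' = H

section

variable {V : Type} {G : SimpleGraph V}

lemma BiconnOn.preconnOn_diff_singleton {A : Set V} (hA : BiconnOn G A) (v : V) :
    PreconnOn G (A \ {v}) := by
  by_cases hv : v ∈ A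
  · exact hA.2 v hv
  · rw [Set.sdiff_singleton_eq_self hv]
    exact hA.1.preconnected

lemma BiconnOn.union {A B : Set V} (hA : BiconnOn G A) (hB : BiconnOn G B)
    (hAB : 1 < (A ∩ B).ncard) : BiconnOn G (A ∪ B) := by
  obtain ⟨w, hw⟩ := Set.nonempty_of_ncard_ne_zero (by omega : (A ∩ B).ncard ≠ 0)
  refine ⟨induce_union_connected hA.1.preconnected hB.1.preconnected ⟨w, hw⟩, fun v _ => ?_⟩
  obtain ⟨u, hu, huv⟩ := Set.exists_ne_of_one_lt_ncard hAB v
  rw [PreconnOn, Set.union_sdiff_distrib]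
  exact (induce_union_connected (hA.preconnOn_diff_singleton v) (hB.preconnOn_diff_singleton v)
    ⟨u, ⟨hu.1, huv⟩, hu.2, huv⟩).preconnected

lemma IsCluster.eq_of_subset {Q : Set V → Prop} {H H' : Set V} (hH : IsCluster Q H)
    (hHH' : H ⊆ H') (hQ : Q H') : H' = H :=
  hH.2 H' hHH' (Or.inr hQ)

lemma IsCluster.of_one_lt_ncard {Q : Set V → Prop} {H : Set V} (hH : IsCluster Q H)
    (h : 1 < H.ncard) : Q H := by
  rcases hH.1 with ⟨v, rfl⟩ | hQ
  · simp at h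
  · exact hQ

end

theorem stmt5_general {V : Type} [Fintype V]
    (G : SimpleGraph V) (P : Set V → Prop) (d : ℕ) (hd : 2 ≤ d)
    (hObd : ∀ B : Set V, BiconnOn G B → 3 ≤ B.ncard →
      ¬ (d < B.ncard ∧ B.ncard ≤ 2 * d - 2))
    (hFree : ∀ B : Set V, BiconnOn G B → 2 ≤ B.ncard → B.ncard ≤ d → P B) :
    ∀ H₁ H₂ : Set V,
      IsCluster (fun B => P B ∧ BiconnOn G B ∧ 2 ≤ B.ncard ∧ B.ncard ≤ d) H₁ →
      IsCluster (fun B => P B ∧ BiconnOn G B ∧ 2 ≤ B.ncard ∧ B.ncard ≤ d) H₂ →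
      H₁ ≠ H₂ → (H₁ ∩ H₂).ncard ≤ 1 := by
  intro H₁ H₂ h₁ h₂ hne
  by_contra! hcard
  obtain ⟨-, hB₁, h2₁, hd₁⟩ :=
    h₁.of_one_lt_ncard (hcard.trans_le (Set.ncard_le_ncard Set.inter_subset_left))
  obtain ⟨-, hB₂, -, hd₂⟩ :=
    h₂.of_one_lt_ncard (hcard.trans_le (Set.ncard_le_ncard Set.inter_subset_right))
  have hU : BiconnOn G (H₁ ∪ H₂) := hB₁.union hB₂ hcard
  have hcardU := Set.ncard_union_add_ncard_inter H₁ H₂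
  have hle : H₁.ncard ≤ (H₁ ∪ H₂).ncard := Set.ncard_le_ncard Set.subset_union_left
  by_cases hUd : (H₁ ∪ H₂).ncard ≤ d
  · have hQ : P (H₁ ∪ H₂) ∧ BiconnOn G (H₁ ∪ H₂) ∧ 2 ≤ (H₁ ∪ H₂).ncard ∧ (H₁ ∪ H₂).ncard ≤ d :=
      ⟨hFree _ hU (by omega) hUd, hU, by omega, hUd⟩
    exact hne ((h₁.eq_of_subset Set.subset_union_left hQ).symm.trans
      (h₂.eq_of_subset Set.subset_union_right hQ))
  · exact hObd _ hU (by omega) ⟨by omega, by omega⟩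

/-- Let `𝒫` be a non-degenerate block-hereditary class of biconnected
graphs (represented by the predicate `P` on vertex subsets of `G`), and `d ≥ 2`.
Suppose `G` has no induced 2-connected subgraph on more than `d` and at most `2d − 2`
vertices, and no induced biconnected subgraph on between `2` and `d` vertices outside
`𝒫`.  Then any two distinct `(𝒫 ∩ B_{2,d})`-clusters of `G` share at most one vertex. -/
theorem stmt5 {V : Type} [Fintype V] [DecidableEq V]
    (G : SimpleGraph V) (P : Set V → Prop) (d : ℕ) (hd : 2 ≤ d)
    (hbicP : ∀ B : Set V, P B → BiconnOn G B)
    (hK2 : ∀ u v : V, G.Adj u v → P {u, v})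
    (hObd : ∀ B : Set V, BiconnOn G B → 3 ≤ B.ncard →
      ¬ (d < B.ncard ∧ B.ncard ≤ 2 * d - 2))
    (hFree : ∀ B : Set V, BiconnOn G B → 2 ≤ B.ncard → B.ncard ≤ d → P B) :
    ∀ H₁ H₂ : Set V,
      IsCluster (fun B => P B ∧ BiconnOn G B ∧ 2 ≤ B.ncard ∧ B.ncard ≤ d) H₁ →
      IsCluster (fun B => P B ∧ BiconnOn G B ∧ 2 ≤ B.ncard ∧ B.ncard ≤ d) H₂ →
      H₁ ≠ H₂ → (H₁ ∩ H₂).ncard ≤ 1 :=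
  stmt5_general G P d hd hObd hFree
end

section
/- Let k and d be positive integers with d ≥ 3. Let T be a tree with maximum degree at most d, and let A ⊆ V(T). If |A| ≥ k·(d² − d + 1), then T contains k pairwise vertex-disjoint subtrees T₁,…,T_k such that each T_i contains at least d vertices of A. -/
/-!
Root the tree at a vertex `a` of `A` and call a vertex heavy if the branch below it contains at
least `d` vertices of `A`; the root is heavy. A deepest heavy vertex `v` has at most `d` children,
each of whose branches holds at most `d - 1` vertices of `A`, so the branch `C` below `v` holds
between `d` and `1 + d (d - 1) = d² - d + 1` of them. Both `C` and the rest of the tree are again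
subtrees, so removing `C` and repeating yields the `k` subtrees.

Subtrees are handled as geodesically convex vertex sets: in a tree, a vertex `x` lies on the path
from `u` to `v` exactly when `dist u x + dist x v = dist u v`.
-/

open Finset Function

lemma Nat.le_sq_sub_add_one (d : ℕ) : d ≤ d ^ 2 - d + 1 := by
  rcases d.eq_zero_or_pos with rfl | hd
  · simp
  · rw [sq, ← Nat.mul_sub_one]
    have := Nat.le_mul_of_pos_left (d - 1) hd
    omega

namespace SimpleGraph

variable {V : Type*} {G : SimpleGraph V} {a u v w x y : V}

def Between (G : SimpleGraph V) (u x v : V) : Prop :=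
  G.dist u x + G.dist x v = G.dist u v

noncomputable instance (G : SimpleGraph V) (u x v : V) : Decidable (G.Between u x v) :=
  inferInstanceAs (Decidable (_ = _))

def IsConvex (G : SimpleGraph V) (s : Set V) : Prop :=
  ∀ ⦃u⦄, u ∈ s → ∀ ⦃v⦄, v ∈ s → ∀ ⦃x⦄, G.Between u x v → x ∈ s

lemma between_self_left (u v : V) : G.Between u u v := by
  simp [Between]

lemma Between.symm (h : G.Between u x v) : G.Between v x u := by
  rw [Between, G.dist_comm (u := v) (v := x), G.dist_comm (u := x) (v := u),
    G.dist_comm (u := v) (v := u), add_comm]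
  exact h

lemma isConvex_univ : G.IsConvex Set.univ := fun _ _ _ _ _ _ => trivial

lemma IsConvex.inter {s t : Set V} (hs : G.IsConvex s) (ht : G.IsConvex t) :
    G.IsConvex (s ∩ t) :=
  fun _ hu _ hv _ hx => ⟨hs hu.1 hv.1 hx, ht hu.2 hv.2 hx⟩

namespace Connected

variable (hG : G.Connected)
include hG

lemma between_of_between (h₁ : G.Between a u w) (h₂ : G.Between u v w) :
    G.Between a u v ∧ G.Between a v w := by
  unfold Between at *
  have := hG.dist_triangle (u := a) (v := u) (w := v)
  have := hG.dist_triangle (u := a) (v := v) (w := w)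
  omega

lemma between_trans (h₁ : G.Between a y w) (h₂ : G.Between a v y) : G.Between a v w :=
  (hG.between_of_between h₁.symm h₂.symm).2.symm

lemma between_of_mem_support {p : G.Walk u v} (hp : p.length = G.dist u v)
    (hx : x ∈ p.support) : G.Between u x v := by
  obtain ⟨q, r, rfl⟩ := Walk.mem_support_iff_exists_append.mp hx
  have := dist_le q
  have := dist_le r
  have := hG.dist_triangle (u := u) (v := x) (w := v)
  rw [Walk.length_append] at hp
  unfold Between
  omega

lemma exists_adj_between (h : u ≠ v) : ∃ c, G.Adj u c ∧ G.Between u c v := by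
  obtain ⟨p, hp⟩ := hG.exists_walk_length_eq_dist u v
  exact ⟨p.snd, Walk.adj_snd (Walk.not_nil_of_ne h),
    hG.between_of_mem_support hp (p.getVert_mem_support 1)⟩

lemma induce_connected_of_isConvex {s : Set V} (hs : G.IsConvex s) (hne : s.Nonempty) :
    (G.induce s).Connected := by
  obtain ⟨u, hu⟩ := hne
  refine induce_connected_of_patches u hu fun {v} hv => ?_
  obtain ⟨p, hp⟩ := hG.exists_walk_length_eq_dist u v
  exact ⟨{x | x ∈ p.support}, fun x hx => hs hu hv (hG.between_of_mem_support hp hx),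
    p.start_mem_support, p.end_mem_support, p.connected_induce_support _ _⟩

lemma card_filter_between_inter_le [DecidableEq V] [G.LocallyFinite] {d : ℕ}
    (hdeg : ∀ v, G.degree v ≤ d) {S A : Finset V} (hS : G.IsConvex S) (hvS : v ∈ S)
    (hchild : ∀ c ∈ S, G.Adj v c → G.Between a v c →
      #({u ∈ S | G.Between a c u} ∩ A) < d) :
    #({u ∈ S | G.Between a v u} ∩ A) ≤ d ^ 2 - d + 1 := by
  let children : Finset V := {c ∈ G.neighborFinset v | c ∈ S ∧ G.Between a v c}
  have hcover : {u ∈ S | G.Between a v u} ∩ A ⊆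
      insert v (children.biUnion fun c => {u ∈ S | G.Between a c u} ∩ A) := by
    intro u hu
    obtain ⟨⟨huS, hvu⟩, huA⟩ : (u ∈ S ∧ G.Between a v u) ∧ u ∈ A := by
      simpa using hu
    rcases eq_or_ne v u with rfl | hne
    · exact mem_insert_self _ _
    obtain ⟨c, hvc, hcu⟩ := hG.exists_adj_between hne
    obtain ⟨hac, hacu⟩ := hG.between_of_between hvu hcu
    refine mem_insert_of_mem (mem_biUnion.mpr ⟨c, ?_, ?_⟩)
    · simpa [children, hvc] using ⟨hS hvS huS hcu, hac⟩
    · simpa [huS, huA] using hacu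
  calc #({u ∈ S | G.Between a v u} ∩ A)
      ≤ #(children.biUnion fun c => {u ∈ S | G.Between a c u} ∩ A) + 1 :=
        (card_le_card hcover).trans (card_insert_le _ _)
    _ ≤ #children * (d - 1) + 1 := by
      gcongr
      refine card_biUnion_le_card_mul _ _ _ fun c hc => Nat.le_sub_one_of_lt ?_
      obtain ⟨hvc, hcS, hac⟩ : G.Adj v c ∧ c ∈ S ∧ G.Between a v c := by
        simpa [children] using hc
      exact hchild c hcS hvc hac
    _ ≤ d * (d - 1) + 1 := by
      gcongr
      exact (card_filter_le _ _).trans (card_neighborFinset_eq_degree G v ▸ hdeg v)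
    _ = d ^ 2 - d + 1 := by rw [Nat.mul_sub_one, sq]

end Connected

namespace IsTree

variable (hT : G.IsTree)
include hT

lemma mem_support_of_between {p : G.Walk u v} (hp : p.IsPath) (h : G.Between u x v) :
    x ∈ p.support := by
  obtain ⟨q, hq⟩ := hT.connected.exists_walk_length_eq_dist u x
  obtain ⟨r, hr⟩ := hT.connected.exists_walk_length_eq_dist x v
  have hqr : (q.append r).IsPath :=
    (q.append r).isPath_of_length_eq_dist (by rw [Walk.length_append, hq, hr]; exact h)
  have : q.append r = p := congrArg Subtype.val
    ((hT.isAcyclic.subsingleton_path u v).elim ⟨_, hqr⟩ ⟨p, hp⟩)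
  rw [← this, Walk.mem_support_append_iff]
  exact Or.inr r.start_mem_support

lemma between_or_between (y : V) (h : G.Between u x v) :
    G.Between u x y ∨ G.Between y x v := by
  classical
  obtain ⟨q, hq⟩ := hT.connected.exists_walk_length_eq_dist u y
  obtain ⟨r, hr⟩ := hT.connected.exists_walk_length_eq_dist y v
  have hx := (q.append r).support_bypass_subset_support
    (hT.mem_support_of_between (q.append r).bypass_isPath h)
  rcases (Walk.mem_support_append_iff _ _).mp hx with hx | hx
  · exact .inl (hT.connected.between_of_mem_support hq hx)
  · exact .inr (hT.connected.between_of_mem_support hr hx)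

lemma isConvex_setOf_between (a v : V) : G.IsConvex {u | G.Between a v u} := by
  intro u hu w hw y hy
  rcases hT.between_or_between v hy with hy | hy
  · exact (hT.connected.between_of_between hu hy.symm).1
  · exact (hT.connected.between_of_between hw hy).1

lemma isConvex_compl_setOf_between (a v : V) : G.IsConvex {u | G.Between a v u}ᶜ := by
  intro u hu w hw y hy hya
  rcases hT.between_or_between a hy with hy | hy
  · exact hu (hT.connected.between_trans hy.symm hya)
  · exact hw (hT.connected.between_trans hy hya)

variable [DecidableEq V] [G.LocallyFinite] {d : ℕ} (hdeg : ∀ v, G.degree v ≤ d)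
include hdeg

lemma exists_convex_piece (hd : 0 < d) {S A : Finset V} (hS : G.IsConvex S)
    (hA : d ≤ #(S ∩ A)) : ∃ C ⊆ S, G.IsConvex C ∧ G.IsConvex ↑(S \ C) ∧
      d ≤ #(C ∩ A) ∧ #(C ∩ A) ≤ d ^ 2 - d + 1 := by
  obtain ⟨a, ha⟩ : (S ∩ A).Nonempty := card_pos.mp (by omega)
  let heavy : Finset V := {v ∈ S | d ≤ #({u ∈ S | G.Between a v u} ∩ A)}
  have ha_heavy : a ∈ heavy := by
    have : {u ∈ S | G.Between a a u} = S := filter_true_of_mem fun u _ => between_self_left a u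
    simpa [heavy, this] using ⟨(mem_inter.mp ha).1, hA⟩
  -- a deepest heavy vertex: its children are one step further from `a`, hence not heavy
  obtain ⟨v, hv, hmax⟩ := heavy.exists_max_image (G.dist a) ⟨a, ha_heavy⟩
  obtain ⟨hvS, hvA⟩ := mem_filter.mp hv
  refine ⟨{u ∈ S | G.Between a v u}, filter_subset _ _, ?_, ?_, hvA, ?_⟩
  · rw [coe_filter]
    exact hS.inter (hT.isConvex_setOf_between a v)
  · rw [← filter_not, coe_filter]
    exact hS.inter (hT.isConvex_compl_setOf_between a v)
  refine hT.connected.card_filter_between_inter_le hdeg hS hvS fun c hcS hvc hac => ?_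
  by_contra! hheavy
  have := hmax c (mem_filter.mpr ⟨hcS, hheavy⟩)
  have : G.dist v c = 1 := dist_eq_one_iff_adj.mpr hvc
  unfold Between at hac
  omega

lemma exists_pairwise_disjoint_convex (hd : 0 < d) (A : Finset V) :
    ∀ (k : ℕ) {S : Finset V}, G.IsConvex S → k * (d ^ 2 - d + 1) ≤ #(S ∩ A) →
      ∃ T : Fin k → Finset V, (∀ i, T i ⊆ S) ∧ (∀ i, G.IsConvex (T i)) ∧
        (∀ i, d ≤ #(T i ∩ A)) ∧ Pairwise (Disjoint on T)
  | 0, _, _, _ =>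
    ⟨Fin.elim0, fun i => i.elim0, fun i => i.elim0, fun i => i.elim0, fun i => i.elim0⟩
  | k + 1, S, hS, hA => by
    obtain ⟨C, hCS, hC, hSC, hCA, hCA'⟩ := hT.exists_convex_piece hdeg hd hS (A := A)
      ((Nat.le_sq_sub_add_one d).trans ((Nat.le_mul_of_pos_left _ k.succ_pos).trans hA))
    have hrest : k * (d ^ 2 - d + 1) ≤ #((S \ C) ∩ A) := by
      have : #(S ∩ A) ≤ #((S \ C) ∩ A) + #(C ∩ A) :=
        (card_le_card fun x => by simp only [mem_inter, mem_union, mem_sdiff]; tauto).trans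
          (card_union_le _ _)
      rw [add_mul, one_mul] at hA
      omega
    obtain ⟨T, hTS, hTconv, hTA, hTdisj⟩ := exists_pairwise_disjoint_convex hd A k hSC hrest
    have hCT (i : Fin k) : Disjoint C (T i) := disjoint_sdiff.mono_right (hTS i)
    exact ⟨Fin.cons C T, Fin.forall_fin_succ.mpr ⟨hCS, fun i => (hTS i).trans sdiff_subset⟩,
      Fin.forall_fin_succ.mpr ⟨hC, hTconv⟩, Fin.forall_fin_succ.mpr ⟨hCA, hTA⟩,
      pairwise_fin_succ_iff.mpr ⟨fun i => (hCT i).symm, hCT, fun i j hij => hTdisj hij⟩⟩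

end IsTree

end SimpleGraph

open SimpleGraph

theorem stmt7_general {V : Type} [Fintype V] [DecidableEq V]
    (k d : ℕ) (hd : 3 ≤ d)
    (G : SimpleGraph V) [DecidableRel G.Adj]
    (hT : G.IsTree) (hdeg : ∀ v : V, G.degree v ≤ d)
    (A : Finset V) (hA : k * (d ^ 2 - d + 1) ≤ A.card) :
    ∃ T : Fin k → Finset V,
      (∀ i, (G.induce ((T i : Finset V) : Set V)).Connected) ∧
      (∀ i, d ≤ ((T i) ∩ A).card) ∧
      (∀ i j, i ≠ j → Disjoint (T i) (T j)) := by
  obtain ⟨T, -, hconv, hTA, hdisj⟩ := hT.exists_pairwise_disjoint_convex hdeg (by omega) A k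
    (S := univ) (by simpa using isConvex_univ) (by simpa using hA)
  have hne (i : Fin k) : (T i : Set V).Nonempty :=
    coe_nonempty.mpr (((card_pos (s := T i ∩ A)).mp (by have := hTA i; omega)).mono
      inter_subset_left)
  exact ⟨T, fun i => hT.connected.induce_connected_of_isConvex (hconv i) (hne i), hTA,
    fun i j hij => hdisj hij⟩

/-- Let `k, d` be positive integers with `d ≥ 3`, let `T` be a finite
tree with maximum degree at most `d`, and let `A ⊆ V(T)`.  If `|A| ≥ k(d² − d + 1)`,
then `T` contains `k` pairwise vertex-disjoint subtrees (connected subgraphs), each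
containing at least `d` vertices of `A`. -/
theorem stmt7 {V : Type} [Fintype V] [DecidableEq V]
    (k d : ℕ) (hk : 0 < k) (hd : 3 ≤ d)
    (G : SimpleGraph V) [DecidableRel G.Adj]
    (hT : G.IsTree) (hdeg : ∀ v : V, G.degree v ≤ d)
    (A : Finset V) (hA : k * (d ^ 2 - d + 1) ≤ A.card) :
    ∃ T : Fin k → Finset V,
      (∀ i, (G.induce ((T i : Finset V) : Set V)).Connected) ∧
      (∀ i, d ≤ ((T i) ∩ A).card) ∧
      (∀ i j, i ≠ j → Disjoint (T i) (T j)) :=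
  stmt7_general k d hd G hT hdeg A hA
end

section
/- Let G be a graph, v a vertex of G, and T a tree subgraph of G − v with at least d ≥ 2 vertices, all of whose leaves are neighbors of v in G. Then the subgraph of G induced by V(T) ∪ {v} is 2-connected and has at least d + 1 vertices. -/
open SimpleGraph

/-- From a walk in `G.induce A` whose support lies (after coercion) in `S`,
get reachability in `G.induce S`. -/
lemma walk_reach_induce {V : Type} {G : SimpleGraph V} {A S : Set V}
    {a b : ↥A} (p : (G.induce A).Walk a b)
    (hs : ∀ x ∈ p.support, (x : V) ∈ S) (ha : (a : V) ∈ S) (hb : (b : V) ∈ S) :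
    (G.induce S).Reachable ⟨a, ha⟩ ⟨b, hb⟩ := by
  induction p with
  | nil => exact Reachable.refl _
  | @cons a c b h q ih =>
    have hc : (c : V) ∈ S := hs c (by simp)
    have hadj : (G.induce S).Adj ⟨a, ha⟩ ⟨c, hc⟩ := by
      simpa using (by simpa using h : G.Adj (a : V) (c : V))
    exact (hadj.reachable).trans (ih (fun x hx => hs x (by simp [hx])) hc hb)

/-- In a finite tree, from any vertex `w ≠ u` one can reach, avoiding `u`,
a vertex satisfying `L`, provided every non-`L` vertex with a neighbor has a
second neighbor. -/
lemma tree_leaf_reach {W : Type} [Fintype W] [DecidableEq W] {T : SimpleGraph W}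
    (ht : T.IsTree) (L : W → Prop)
    (hL : ∀ w, ¬ L w → ∀ y, T.Adj w y → ∃ w', T.Adj w w' ∧ w' ≠ y) (u : W) :
    ∀ (k : ℕ) (w : W), w ≠ u → ∀ p : T.Walk w u, p.IsPath →
      Fintype.card W ≤ p.length + k →
      ∃ ℓ, L ℓ ∧ ∃ q : T.Walk w ℓ, u ∉ q.support := by
  intro k
  induction k with
  | zero =>
    intro w hw p hp hk
    exact absurd hp.length_lt (by omega)
  | succ k ih =>
    intro w hw p hp hk
    by_cases hLw : L w
    · exact ⟨w, hLw, Walk.nil, by simp [Ne.symm hw]⟩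
    · cases p with
      | nil => exact absurd rfl hw
      | @cons _ y _ h q =>
        obtain ⟨w', hadj, hne⟩ := hL w hLw y h
        have hq : q.IsPath := hp.of_cons
        have hw'sup : w' ∉ (Walk.cons h q).support := by
          intro hmem
          rw [Walk.support_cons] at hmem
          rcases List.mem_cons.mp hmem with h1 | h2
          · exact hadj.ne h1.symm
          · have hq'path : (q.takeUntil w' h2).IsPath := hq.takeUntil h2
            have hwq : w ∉ (q.takeUntil w' h2).support := fun hws =>
              ((Walk.cons_isPath_iff h q).mp hp).2 (q.support_takeUntil_subset h2 hws)
            have hP1 : (Walk.cons h (q.takeUntil w' h2)).IsPath := hq'path.cons hwq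
            have hP2 : (Walk.cons hadj Walk.nil).IsPath := by
              simp [Walk.cons_isPath_iff, hadj.ne]
            have heq : Walk.cons h (q.takeUntil w' h2) = Walk.cons hadj Walk.nil :=
              (ht.existsUnique_path w w').unique hP1 hP2
            have hlen := congrArg Walk.length heq
            simp only [Walk.length_cons, Walk.length_nil] at hlen
            have hlen0 : (q.takeUntil w' h2).length = 0 := by omega
            exact hne (Walk.eq_of_length_eq_zero hlen0).symm
        have hw'u : w' ≠ u := fun he => hw'sup (by rw [he]; exact Walk.end_mem_support _)
        have hP' : (Walk.cons hadj.symm (Walk.cons h q)).IsPath := hp.cons hw'sup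
        obtain ⟨ℓ, hLℓ, q'', hq''⟩ := ih w' hw'u _ hP' (by simp only [Walk.length_cons] at hk ⊢; omega)
        refine ⟨ℓ, hLℓ, Walk.cons hadj q'', ?_⟩
        rw [Walk.support_cons]
        intro hmem
        rcases List.mem_cons.mp hmem with h1 | h2
        · exact hw h1.symm
        · exact hq'' h2

/-- Let `G` be a graph, `v` a vertex, and `B ⊆ V(G) \ {v}` a set
inducing a tree with at least `d ≥ 2` vertices all of whose leaves (vertices with
exactly one neighbor in `B`) are neighbors of `v`.  Then `G[B ∪ {v}]` is 2-connected
and has at least `d + 1` vertices. -/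
theorem stmt8 {V : Type} [Fintype V] [DecidableEq V]
    (G : SimpleGraph V) (v : V) (d : ℕ) (hd : 2 ≤ d)
    (B : Set V) (hvB : v ∉ B)
    (htree : (G.induce B).IsTree)
    (hcard : d ≤ B.ncard)
    (hleaf : ∀ u ∈ B, {w ∈ B | G.Adj u w}.ncard = 1 → G.Adj v u) :
    BiconnOn G (insert v B) ∧ 3 ≤ (insert v B).ncard ∧
      d + 1 ≤ (insert v B).ncard := by
  classical
  have hBfin : B.Finite := Set.toFinite B
  haveI : Fintype ↥B := hBfin.fintype
  have hB2 : 2 ≤ B.ncard := le_trans hd hcard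
  have hcardins : (insert v B).ncard = B.ncard + 1 :=
    Set.ncard_insert_of_notMem hvB hBfin
  have hcardW : Fintype.card ↥B = B.ncard := by
    rw [← Nat.card_coe_set_eq, Nat.card_eq_fintype_card]
  -- non-leaves have a second neighbor
  have hL : ∀ w : ↥B, ¬ G.Adj v ↑w → ∀ y, (G.induce B).Adj w y →
      ∃ w', (G.induce B).Adj w w' ∧ w' ≠ y := by
    intro w hw y hy
    have hyG : G.Adj ↑w ↑y := by simpa using hy
    have hys : (y : V) ∈ {w' ∈ B | G.Adj ↑w w'} := ⟨y.2, hyG⟩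
    have hfin : {w' ∈ B | G.Adj ↑w w'}.Finite := hBfin.subset fun x hx => hx.1
    have h1 : 0 < {w' ∈ B | G.Adj ↑w w'}.ncard := (Set.ncard_pos hfin).2 ⟨_, hys⟩
    have hne1 : {w' ∈ B | G.Adj ↑w w'}.ncard ≠ 1 := fun h => hw (hleaf ↑w w.2 h)
    have hlt : 1 < {w' ∈ B | G.Adj (↑w : V) w'}.ncard := by omega
    obtain ⟨w', hw's, hww'⟩ := Set.exists_ne_of_one_lt_ncard hlt (↑y : V)
    refine ⟨⟨w', hw's.1⟩, by simpa using hw's.2, fun hc => hww' (congrArg Subtype.val hc)⟩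
  -- from any x ≠ u, reach a neighbor of v avoiding u, inside the tree
  have key : ∀ (u x : ↥B), x ≠ u →
      ∃ ℓ : ↥B, G.Adj v ↑ℓ ∧ ∃ q : (G.induce B).Walk x ℓ, u ∉ q.support := by
    intro u x hxu
    obtain ⟨p, hp⟩ : ∃ p : (G.induce B).Walk x u, p.IsPath := by
      obtain ⟨p⟩ := htree.isConnected.preconnected x u
      exact ⟨p.toPath, (p.toPath).2⟩
    exact tree_leaf_reach htree _ hL u (Fintype.card ↥B) x hxu p hp (Nat.le_add_left _ _)
  -- reach v in any induced subgraph containing v and B \ {u}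
  have reachv : ∀ (u : ↥B) (S : Set V) (hvS : v ∈ S)
      (hBS : ∀ y : ↥B, y ≠ u → (y : V) ∈ S) (x : ↥B) (hxu : x ≠ u),
      (G.induce S).Reachable ⟨↑x, hBS x hxu⟩ ⟨v, hvS⟩ := by
    intro u S hvS hBS x hxu
    obtain ⟨ℓ, hadjℓ, q, hq⟩ := key u x hxu
    have hsup : ∀ z ∈ q.support, (z : V) ∈ S :=
      fun z hz => hBS z (fun he => hq (he ▸ hz))
    have hℓS : (ℓ : V) ∈ S := hBS ℓ (fun he => hq (by rw [← he]; exact q.end_mem_support))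
    have r1 := walk_reach_induce q hsup (hBS x hxu) hℓS
    have r2 : (G.induce S).Adj ⟨↑ℓ, hℓS⟩ ⟨v, hvS⟩ := by simpa using hadjℓ.symm
    exact r1.trans r2.reachable
  have hvmem : v ∈ insert v B := Set.mem_insert v B
  refine ⟨⟨?_, ?_⟩, by omega, by omega⟩
  · -- ConnOn
    show (G.induce (insert v B)).Connected
    haveI : Nonempty ↥(insert v B) := ⟨⟨v, hvmem⟩⟩
    refine Connected.mk ?_
    have toV : ∀ x : ↥(insert v B), (G.induce (insert v B)).Reachable x ⟨v, hvmem⟩ := by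
      rintro ⟨x, hx⟩
      rcases hx with rfl | hxB
      · exact Reachable.refl _
      · have hlt : 1 < B.ncard := by omega
        obtain ⟨u, huB, hux⟩ := Set.exists_ne_of_one_lt_ncard hlt x
        exact reachv ⟨u, huB⟩ (insert v B) hvmem
          (fun y _ => Set.mem_insert_of_mem _ y.2) ⟨x, hxB⟩
          (fun hc => hux (congrArg Subtype.val hc).symm)
    intro x y
    exact (toV x).trans (toV y).symm
  · -- no cut vertex
    intro u hu
    rcases hu with rfl | huB
    · show (G.induce _).Preconnected
      rw [Set.insert_diff_self_of_notMem hvB]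
      exact htree.isConnected.preconnected
    · have hvu : v ≠ u := fun he => hvB (he ▸ huB)
      have hvS : v ∈ insert v B \ {u} := ⟨hvmem, hvu⟩
      have hBS : ∀ y : ↥B, y ≠ (⟨u, huB⟩ : ↥B) → (y : V) ∈ insert v B \ {u} :=
        fun y hy => ⟨Set.mem_insert_of_mem _ y.2,
          fun hc => hy (Subtype.ext (by simpa using hc))⟩
      have toV : ∀ x : ↥(insert v B \ {u}),
          (G.induce (insert v B \ {u})).Reachable x ⟨v, hvS⟩ := by
        rintro ⟨x, hx⟩
        obtain ⟨hx1, hx2⟩ := hx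
        rcases hx1 with rfl | hxB
        · exact Reachable.refl _
        · exact reachv ⟨u, huB⟩ _ hvS hBS ⟨x, hxB⟩
            (fun hc => hx2 (by simpa using congrArg Subtype.val hc))
      intro x y
      exact (toV x).trans (toV y).symm
end

section
/- Every 2-connected graph that is not a cycle contains a subdivision of the diamond (K₄ minus an edge) as a subgraph; equivalently, a graph is a cactus graph if and only if it contains no subdivision of the diamond. -/
/-!
Let `v` be a vertex of degree `≠ 2`. Two-connectivity and `3 ≤ |V|` force every degree to be at
least `2`, so `v` has three distinct neighbours `x`, `y`, `z`. Inside `G - v` join `x` to `y` by a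
path `Q`, and follow a path from `z` towards `x` until it first meets `Q`, say at `t`. Splitting `Q`
at `t` and prefixing the edges `vx`, `vy`, `vz` gives three internally disjoint `v`–`t` paths.
-/

open SimpleGraph

/-- Two `a`–`b` paths are internally disjoint: they share only `a` and `b`. -/
def InternallyDisjoint {V : Type} {G : SimpleGraph V} {a b : V}
    (p q : G.Path a b) : Prop :=
  ∀ u : V, u ∈ (p : G.Walk a b).support → u ∈ (q : G.Walk a b).support →
    u = a ∨ u = b

/-- `G` contains a subdivision of the diamond (`K₄` minus an edge) as a subgraph:
equivalently, there are two distinct vertices joined by three pairwise internally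
disjoint, pairwise distinct paths. -/
def HasDiamondSubdivision {V : Type} (G : SimpleGraph V) : Prop :=
  ∃ a b : V, a ≠ b ∧ ∃ p q r : G.Path a b,
    p ≠ q ∧ p ≠ r ∧ q ≠ r ∧
    InternallyDisjoint p q ∧ InternallyDisjoint p r ∧ InternallyDisjoint q r

namespace SimpleGraph.Walk

variable {V : Type*} {G : SimpleGraph V} [DecidableEq V]

lemma IsPath.eq_of_mem_support_takeUntil_of_mem_support_dropUntil {u v t x : V}
    {p : G.Walk u v} (hp : p.IsPath) (ht : t ∈ p.support)
    (hx₁ : x ∈ (p.takeUntil t ht).support) (hx₂ : x ∈ (p.dropUntil t ht).support) : x = t := by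
  by_contra hxt
  have hnodup := hp.support_nodup
  rw [← p.take_spec ht, support_append, List.nodup_append] at hnodup
  rw [← cons_tail_support, List.mem_cons] at hx₂
  exact hnodup.2.2 x hx₁ x (hx₂.resolve_left hxt) rfl

end SimpleGraph.Walk

lemma exists_ne_ne_of_three_le_card {α : Type*} [Fintype α] (hcard : 3 ≤ Fintype.card α)
    (a b : α) : ∃ c, c ≠ a ∧ c ≠ b := by
  classical
  have hlt : ({a, b} : Finset α).card < (Finset.univ : Finset α).card :=
    Finset.card_le_two.trans_lt (by rw [Finset.card_univ]; omega)
  obtain ⟨c, -, hc⟩ := Finset.exists_mem_notMem_of_card_lt_card hlt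
  simp only [Finset.mem_insert, Finset.mem_singleton, not_or] at hc
  exact ⟨c, hc⟩

variable {V : Type}

lemma PreconnOn.exists_isPath_notMem_support [DecidableEq V] {G : SimpleGraph V} {a x y : V}
    (h : PreconnOn G {u | u ≠ a}) (hx : x ≠ a) (hy : y ≠ a) :
    ∃ p : G.Walk x y, p.IsPath ∧ a ∉ p.support := by
  obtain ⟨w⟩ := h ⟨x, hx⟩ ⟨y, hy⟩
  have hap : a ∉ (w.map (Embedding.induce {u | u ≠ a}).toHom).support := by
    rw [Walk.support_map, List.mem_map]
    rintro ⟨u, -, hu⟩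
    exact u.2 hu
  exact ⟨_, Walk.bypass_isPath _, fun h => hap (Walk.support_bypass_subset_support _ h)⟩

lemma PreconnOn.exists_adj_ne {G : SimpleGraph V} {a v w : V} (h : PreconnOn G {u | u ≠ a})
    (hva : v ≠ a) (hwa : w ≠ a) (hvw : v ≠ w) : ∃ b, G.Adj v b ∧ b ≠ a := by
  obtain ⟨p⟩ := h ⟨v, hva⟩ ⟨w, hwa⟩
  have hp : ¬p.Nil := Walk.not_nil_of_ne fun h => hvw (congrArg Subtype.val h)
  exact ⟨p.snd, p.adj_snd hp, p.snd.2⟩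

lemma two_le_degree_of_forall_preconnOn [Fintype V] {G : SimpleGraph V} [DecidableRel G.Adj]
    (hcard : 3 ≤ Fintype.card V) (hnocut : ∀ a, PreconnOn G {u | u ≠ a}) (v : V) :
    2 ≤ G.degree v := by
  obtain ⟨u, huv, -⟩ := exists_ne_ne_of_three_le_card hcard v v
  obtain ⟨w, hwv, hwu⟩ := exists_ne_ne_of_three_le_card hcard v u
  obtain ⟨a, hva, hau⟩ := (hnocut u).exists_adj_ne huv.symm hwu hwv.symm
  obtain ⟨w', hw'v, hw'a⟩ := exists_ne_ne_of_three_le_card hcard v a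
  obtain ⟨b, hvb, hba⟩ := (hnocut a).exists_adj_ne hva.ne hw'a hw'v.symm
  rw [← card_neighborFinset_eq_degree, Nat.succ_le_iff, Finset.one_lt_card]
  exact ⟨a, by simpa using hva, b, by simpa using hvb, hba.symm⟩

section Theta

variable {G : SimpleGraph V} {v x y t : V}

lemma path_cons_ne_of_ne {hx : G.Adj v x} {hy : G.Adj v y} {P : G.Walk x t} {Q : G.Walk y t}
    (hP : (Walk.cons hx P).IsPath) (hQ : (Walk.cons hy Q).IsPath) (hxy : x ≠ y) :
    (⟨_, hP⟩ : G.Path v t) ≠ ⟨_, hQ⟩ := fun h =>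
  hxy (by simpa using congrArg (fun p : G.Path v t => (p : G.Walk v t).snd) h)

lemma internallyDisjoint_cons {hx : G.Adj v x} {hy : G.Adj v y} {P : G.Walk x t}
    {Q : G.Walk y t} (hP : (Walk.cons hx P).IsPath) (hQ : (Walk.cons hy Q).IsPath)
    (hPQ : ∀ u ∈ P.support, u ∈ Q.support → u = t) :
    InternallyDisjoint ⟨_, hP⟩ ⟨_, hQ⟩ := by
  intro u huP huQ
  simp only [Walk.support_cons, List.mem_cons] at huP huQ
  rcases huP with rfl | huP
  · exact Or.inl rfl
  rcases huQ with rfl | huQ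
  · exact Or.inl rfl
  · exact Or.inr (hPQ u huP huQ)

lemma hasDiamondSubdivision_of_three_paths {z : V} (hx : G.Adj v x) (hy : G.Adj v y)
    (hz : G.Adj v z) (hxy : x ≠ y) (hxz : x ≠ z) (hyz : y ≠ z)
    {P₁ : G.Walk x t} {P₂ : G.Walk y t} {P₃ : G.Walk z t} (h₁ : (Walk.cons hx P₁).IsPath)
    (h₂ : (Walk.cons hy P₂).IsPath) (h₃ : (Walk.cons hz P₃).IsPath)
    (h₁₂ : ∀ u ∈ P₁.support, u ∈ P₂.support → u = t)
    (h₁₃ : ∀ u ∈ P₁.support, u ∈ P₃.support → u = t)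
    (h₂₃ : ∀ u ∈ P₂.support, u ∈ P₃.support → u = t) : HasDiamondSubdivision G := by
  have hvt : v ≠ t := fun h => (Walk.cons_isPath_iff hx P₁).mp h₁ |>.2 (h ▸ P₁.end_mem_support)
  exact ⟨v, t, hvt, ⟨_, h₁⟩, ⟨_, h₂⟩, ⟨_, h₃⟩, path_cons_ne_of_ne h₁ h₂ hxy,
    path_cons_ne_of_ne h₁ h₃ hxz, path_cons_ne_of_ne h₂ h₃ hyz, internallyDisjoint_cons h₁ h₂ h₁₂,
    internallyDisjoint_cons h₁ h₃ h₁₃, internallyDisjoint_cons h₂ h₃ h₂₃⟩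

lemma hasDiamondSubdivision_of_path_of_ear [DecidableEq V] {z : V} (hx : G.Adj v x)
    (hy : G.Adj v y) (hz : G.Adj v z) (hxy : x ≠ y) (hxz : x ≠ z) (hyz : y ≠ z)
    {Q : G.Walk x y} (hQ : Q.IsPath) (hvQ : v ∉ Q.support) (ht : t ∈ Q.support)
    {R : G.Walk z t} (hR : R.IsPath) (hvR : v ∉ R.support)
    (hRQ : ∀ u ∈ R.support, u ∈ Q.support → u = t) : HasDiamondSubdivision G := by
  have hvT : v ∉ (Q.takeUntil t ht).support :=
    fun h => hvQ (Q.support_takeUntil_subset_support ht h)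
  have hvD : v ∉ (Q.dropUntil t ht).support :=
    fun h => hvQ (Q.support_dropUntil_subset_support ht h)
  refine hasDiamondSubdivision_of_three_paths hx hy hz hxy hxz hyz
    (P₁ := Q.takeUntil t ht) (P₂ := (Q.dropUntil t ht).reverse) (P₃ := R)
    (Walk.cons_isPath_iff _ _ |>.mpr ⟨hQ.takeUntil ht, hvT⟩)
    (Walk.cons_isPath_iff _ _ |>.mpr ⟨(hQ.dropUntil ht).reverse, by simpa using hvD⟩)
    (Walk.cons_isPath_iff _ _ |>.mpr ⟨hR, hvR⟩) ?_ ?_ ?_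
  · intro u hT hD
    rw [Walk.support_reverse, List.mem_reverse] at hD
    exact hQ.eq_of_mem_support_takeUntil_of_mem_support_dropUntil ht hT hD
  · exact fun u hT hR => hRQ u hR (Q.support_takeUntil_subset_support ht hT)
  · intro u hD hR
    rw [Walk.support_reverse, List.mem_reverse] at hD
    exact hRQ u hR (Q.support_dropUntil_subset_support ht hD)

end Theta

theorem stmt10_general {V : Type} [Fintype V] [DecidableEq V]
    (G : SimpleGraph V) [DecidableRel G.Adj]
    (hcard : 3 ≤ Fintype.card V)
    (hnocut : ∀ v : V, PreconnOn G {u : V | u ≠ v})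
    (hnotcycle : ∃ v : V, G.degree v ≠ 2) :
    HasDiamondSubdivision G := by
  obtain ⟨v, hv⟩ := hnotcycle
  have hdeg : 2 < (G.neighborFinset v).card := by
    rw [card_neighborFinset_eq_degree]
    exact (two_le_degree_of_forall_preconnOn hcard hnocut v).lt_of_ne' hv
  obtain ⟨x, y, z, hx, hy, hz, hxy, hxz, hyz⟩ := Finset.two_lt_card_iff.mp hdeg
  rw [mem_neighborFinset] at hx hy hz
  obtain ⟨Q, hQ, hvQ⟩ := (hnocut v).exists_isPath_notMem_support hx.ne' hy.ne'
  obtain ⟨W, hW, hvW⟩ := (hnocut v).exists_isPath_notMem_support hz.ne' hx.ne'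
  obtain ⟨t, htQ, htW, hfirst⟩ :=
    W.exists_mem_support_forall_mem_support_imp_eq Q.support.toFinset ⟨x, by simp⟩
  rw [List.mem_toFinset] at htQ
  exact hasDiamondSubdivision_of_path_of_ear hx hy hz hxy hxz hyz hQ hvQ htQ (hW.takeUntil htW)
    (fun h => hvW (W.support_takeUntil_subset_support htW h))
    (fun u hu huQ => hfirst u (List.mem_toFinset.mpr huQ) hu)

/-- Every 2-connected graph (connected, at least 3 vertices, no cut
vertex) that is not a cycle (i.e. some vertex has degree ≠ 2) contains a subdivision
of the diamond as a subgraph. -/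
theorem stmt10 {V : Type} [Fintype V] [DecidableEq V]
    (G : SimpleGraph V) [DecidableRel G.Adj]
    (hconn : G.Connected) (hcard : 3 ≤ Fintype.card V)
    (hnocut : ∀ v : V, PreconnOn G {u : V | u ≠ v})
    (hnotcycle : ∃ v : V, G.degree v ≠ 2) :
    HasDiamondSubdivision G :=
  stmt10_general G hcard hnocut hnotcycle
end

section
/- Let G be a graph, v ∈ V(G), and suppose G − v contains k + 1 pairwise vertex-disjoint trees T₀, …, T_k, each with at least d vertices and all leaves in N_G(v). Then every set S ⊆ V(G) with |S| ≤ k such that every block of G − S has at most d vertices must contain v. -/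
open SimpleGraph

/-- `B` is a block of the induced subgraph `G[W]`. -/
def IsBlockIn {V : Type} (G : SimpleGraph V) (W B : Set V) : Prop :=
  B ⊆ W ∧ BiconnOn G B ∧ ∀ C : Set V, B ⊆ C → C ⊆ W → BiconnOn G C → C = B

/-!
Each tree `Tᵢ` together with `v` induces a 2-connected subgraph. Removing `v` leaves the tree;
removing a tree vertex `u` leaves every other tree vertex joined, avoiding `u`, to a leaf of
`Tᵢ`, which is adjacent to `v`. As `|S| ≤ k`, one of the `k + 1` disjoint trees misses `S`, so
if `v ∉ S` the block of `G − S` containing `{v} ∪ Tᵢ` has more than `d` vertices.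
-/

open Function

namespace SimpleGraph

variable {V : Type*} {G : SimpleGraph V}

lemma IsAcyclic.length_eq_dist_of_isPath (hG : G.IsAcyclic) {u v : V} {p : G.Walk u v}
    (hp : p.IsPath) : p.length = G.dist u v := by
  obtain ⟨q, hq, hqlen⟩ := Reachable.exists_path_of_dist ⟨p⟩
  have hpq : (⟨p, hp⟩ : G.Path u v) = ⟨q, hq⟩ := (hG.subsingleton_path u v).elim _ _
  rw [← hqlen, congrArg (fun r : G.Path u v => r.1.length) hpq]

lemma IsTree.exists_walk_to_leaf_avoiding [Finite V] (hG : G.IsTree) {u x : V} (hxu : x ≠ u) :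
    ∃ w, (G.neighborSet w).ncard = 1 ∧ ∃ p : G.Walk x w, u ∉ p.support := by
  -- A vertex `w` farthest from `u` among those reachable from `x` avoiding `u` is a leaf: any
  -- neighbour of `w` off the `u`–`w` path would be reachable and farther from `u`.
  obtain ⟨w, ⟨p, hpu⟩, hmax⟩ := Set.Finite.exists_maximalFor (G.dist u)
    {w | ∃ p : G.Walk x w, u ∉ p.support} (Set.toFinite _) ⟨x, .nil, by simpa using hxu.symm⟩
  have hwu : w ≠ u := by rintro rfl; exact hpu p.end_mem_support
  obtain ⟨q, hq, hqlen⟩ := hG.connected.exists_path_of_dist u w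
  have hnbr : ∀ y, G.Adj w y → y = q.penultimate := by
    intro y hwy
    refine hG.isAcyclic.eq_penultimate_of_adj_end hq hwy (by_contra fun hyq => ?_)
    have hyu : y ≠ u := fun h => hyq (h ▸ q.start_mem_support)
    have hfar : G.dist u y = G.dist u w + 1 := by
      rw [← hG.isAcyclic.length_eq_dist_of_isPath (hq.concat hyq hwy), Walk.length_concat, hqlen]
    have hnear : G.dist u y ≤ G.dist u w :=
      hmax ⟨p.concat hwy, by simp [Walk.support_concat, hpu, hyu.symm]⟩ (by omega)
    omega
  refine ⟨w, Set.ncard_eq_one.mpr ⟨q.penultimate, Set.ext fun y => ⟨hnbr y, ?_⟩⟩, p, hpu⟩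
  rintro rfl
  exact (q.adj_penultimate (q.not_nil_of_ne hwu.symm)).symm

lemma ncard_neighborSet_induce {T : Set V} {t : V} (ht : t ∈ T) :
    ((G.induce T).neighborSet ⟨t, ht⟩).ncard = {w ∈ T | G.Adj t w}.ncard := by
  rw [← Set.ncard_image_of_injective _ Subtype.val_injective]
  congr 1
  ext w
  simp [and_comm]

lemma induce_reachable_of_adj_leaves [Finite V] {T A : Set V} {v u a : V}
    (hT : (G.induce T).IsTree) (hleaf : ∀ t ∈ T, {w ∈ T | G.Adj t w}.ncard = 1 → G.Adj v t)
    (hu : u ∈ T) (ha : a ∈ T) (hau : a ≠ u) (hTA : T \ {u} ⊆ A) (hvA : v ∈ A) :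
    (G.induce A).Reachable ⟨a, hTA ⟨ha, hau⟩⟩ ⟨v, hvA⟩ := by
  obtain ⟨w, hw, p, hpu⟩ :=
    hT.exists_walk_to_leaf_avoiding (u := ⟨u, hu⟩) (x := ⟨a, ha⟩) (by simpa using hau)
  have hpA : ∀ y ∈ (p.map (Embedding.induce T).toHom).support, y ∈ A := by
    simp only [Walk.support_map, List.mem_map]
    rintro _ ⟨y, hy, rfl⟩
    exact hTA ⟨y.2, fun h => hpu ((Subtype.ext h : y = ⟨u, hu⟩) ▸ hy)⟩
  have hwv : G.Adj w v := (hleaf w w.2 (by rw [← ncard_neighborSet_induce]; exact hw)).symm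
  exact (Walk.reachable ((p.map _).induce A hpA)).trans (induce_adj.mpr hwv).reachable

end SimpleGraph

section Blocks

variable {V : Type} {G : SimpleGraph V}

lemma preconnOn_of_forall_reachable {A : Set V} {v : V} (hv : v ∈ A)
    (h : ∀ a (ha : a ∈ A), (G.induce A).Reachable ⟨a, ha⟩ ⟨v, hv⟩) : PreconnOn G A :=
  fun a b => (h a a.2).trans (h b b.2).symm

lemma biconnOn_insert_of_adj_leaves [Finite V] {T : Set V} {v : V} (hT : (G.induce T).IsTree)
    (hT1 : 1 < T.ncard) (hvT : v ∉ T)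
    (hleaf : ∀ t ∈ T, {w ∈ T | G.Adj t w}.ncard = 1 → G.Adj v t) :
    BiconnOn G (insert v T) := by
  refine ⟨?_, ?_⟩
  · have hv : v ∈ insert v T := Set.mem_insert v T
    have : Nonempty ↥(insert v T) := ⟨⟨v, hv⟩⟩
    refine Connected.mk (preconnOn_of_forall_reachable hv ?_)
    rintro a (rfl | haT)
    · rfl
    obtain ⟨u, hu, hua⟩ := Set.exists_ne_of_one_lt_ncard hT1 a
    exact induce_reachable_of_adj_leaves hT hleaf hu haT hua.symm
      (Set.sdiff_subset.trans (Set.subset_insert v T)) hv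
  · rintro u (rfl | hu)
    · rw [Set.insert_sdiff_self_of_notMem hvT]
      exact hT.connected.preconnected
    · have hv : v ∈ insert v T \ {u} := ⟨Set.mem_insert v T, fun h => hvT (h ▸ hu)⟩
      refine preconnOn_of_forall_reachable hv ?_
      rintro a ⟨rfl | haT, hau⟩
      · rfl
      exact induce_reachable_of_adj_leaves hT hleaf hu haT hau
        (Set.sdiff_subset_sdiff_left (Set.subset_insert v T)) hv

lemma exists_isBlockIn_superset [Finite V] {W B : Set V} (hBW : B ⊆ W) (hB : BiconnOn G B) :
    ∃ C, B ⊆ C ∧ IsBlockIn G W C := by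
  obtain ⟨C, ⟨hBC, hCW, hC⟩, hmax⟩ := Set.Finite.exists_maximalFor Set.ncard
    {C | B ⊆ C ∧ C ⊆ W ∧ BiconnOn G C} (Set.toFinite _) ⟨B, subset_rfl, hBW, hB⟩
  refine ⟨C, hBC, hCW, hC, fun C' hCC' hC'W hC' => ?_⟩
  exact (Set.eq_of_subset_of_ncard_le hCC'
    (hmax ⟨hBC.trans hCC', hC'W, hC'⟩ (Set.ncard_le_ncard hCC')) (Set.toFinite _)).symm

end Blocks

lemma Set.exists_disjoint_of_ncard_lt {ι V : Type*} [Fintype ι] {T : ι → Set V}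
    (hT : Pairwise (Disjoint on T)) {S : Set V} (hS : S.Finite)
    (hcard : S.ncard < Fintype.card ι) : ∃ i, Disjoint (T i) S := by
  by_contra! hmeet
  choose f hfT hfS using fun i => Set.not_disjoint_iff.mp (hmeet i)
  have hf : Injective fun i => (⟨f i, hfS i⟩ : S) := fun i j hij => by
    by_contra hne
    have hfij : f i = f j := congrArg Subtype.val hij
    exact Set.disjoint_left.mp (hT hne) (hfT i) (hfij ▸ hfT j)
  have := hS.to_subtype
  have := Nat.card_le_card_of_injective _ hf
  rw [Nat.card_eq_fintype_card, Nat.card_coe_set_eq] at this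
  omega

theorem stmt11_general {V : Type} [Fintype V]
    (G : SimpleGraph V) (v : V) (k d : ℕ) (hd : 2 ≤ d)
    (T : Fin (k + 1) → Set V)
    (hTv : ∀ i, v ∉ T i)
    (hTtree : ∀ i, (G.induce (T i)).IsTree)
    (hTcard : ∀ i, d ≤ (T i).ncard)
    (hTleaf : ∀ i, ∀ u ∈ T i, {w ∈ T i | G.Adj u w}.ncard = 1 → G.Adj v u)
    (hTdisj : ∀ i j, i ≠ j → Disjoint (T i) (T j)) :
    ∀ S : Set V, S.ncard ≤ k →
      (∀ B : Set V, IsBlockIn G Sᶜ B → B.ncard ≤ d) → v ∈ S := by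
  intro S hS hblock
  by_contra hvS
  obtain ⟨i, hi⟩ := Set.exists_disjoint_of_ncard_lt (fun i j hij => hTdisj i j hij)
    (Set.toFinite S) (by simpa using Nat.lt_succ_of_le hS)
  have hB : BiconnOn G (insert v (T i)) :=
    biconnOn_insert_of_adj_leaves (hTtree i) (by have := hTcard i; omega) (hTv i) (hTleaf i)
  obtain ⟨C, hBC, hC⟩ := exists_isBlockIn_superset
    (Set.insert_subset hvS hi.subset_compl_right) hB
  have hCd : d + 1 ≤ d := calc
    d + 1 ≤ (T i).ncard + 1 := Nat.succ_le_succ (hTcard i)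
    _ = (insert v (T i)).ncard := (Set.ncard_insert_of_notMem (hTv i)).symm
    _ ≤ C.ncard := Set.ncard_le_ncard hBC
    _ ≤ d := hblock C hC
  omega

/-- **safeness of Sunflower Rule 1.** If `G − v` contains `k + 1`
pairwise vertex-disjoint `(N_G(v), d)`-trees (trees with at least `d` vertices, all
of whose leaves are neighbors of `v`), then every set `S` of at most `k` vertices such
that every block of `G − S` has at most `d` vertices must contain `v`. -/
theorem stmt11 {V : Type} [Fintype V] [DecidableEq V]
    (G : SimpleGraph V) (v : V) (k d : ℕ) (hd : 2 ≤ d)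
    (T : Fin (k + 1) → Set V)
    (hTv : ∀ i, v ∉ T i)
    (hTtree : ∀ i, (G.induce (T i)).IsTree)
    (hTcard : ∀ i, d ≤ (T i).ncard)
    (hTleaf : ∀ i, ∀ u ∈ T i, {w ∈ T i | G.Adj u w}.ncard = 1 → G.Adj v u)
    (hTdisj : ∀ i j, i ≠ j → Disjoint (T i) (T j)) :
    ∀ S : Set V, S.ncard ≤ k →
      (∀ B : Set V, IsBlockIn G Sᶜ B → B.ncard ≤ d) → v ∈ S :=
  stmt11_general G v k d hd T hTv hTtree hTcard hTleaf hTdisj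
end

section
/- Let G be a graph and let H be a connected component of G such that every block of H with at least one edge belongs to a class P and has at most d vertices. Then for every k ≥ 0: G has a vertex set S with |S| ≤ k such that every block of G − S with an edge is in P and has at most d vertices, if and only if G − V(H) has such a set of size at most k. -/
open SimpleGraph

def HasEdgeIn {V : Type} (G : SimpleGraph V) (B : Set V) : Prop :=
  ∃ u ∈ B, ∃ v ∈ B, G.Adj u v


lemma mem_of_connOn {V : Type} (G : SimpleGraph V) (H : Set V)
    (hH : ∀ u ∈ H, ∀ w : V, G.Adj u w → w ∈ H)
    (B : Set V) (hB : ConnOn G B) :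
    ∀ u v : B, (u : V) ∈ H → (v : V) ∈ H := by
  intro u v hu
  obtain ⟨w⟩ := hB.preconnected u v
  induction w with
  | nil => exact hu
  | cons h p ih => exact ih (hH _ hu _ h)

/-- **safeness of the Component Rule.** Let `H` be a connected
component of `G` such that every block of `G[H]` with at least one edge belongs to the
class `𝒫` (represented by the predicate `P`) and has at most `d` vertices.  Then for
every `k ≥ 0`, `G` has a vertex set `S` with `|S| ≤ k` such that every block of
`G − S` with an edge is in `𝒫` and has at most `d` vertices iff `G − V(H)` has such a
set of size at most `k`. -/
theorem stmt13 {V : Type} [Fintype V] [DecidableEq V]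
    (G : SimpleGraph V) (P : Set V → Prop) (d : ℕ)
    (H : Set V) (hHconn : ConnOn G H)
    (hHcomp : ∀ u ∈ H, ∀ w : V, G.Adj u w → w ∈ H)
    (hHgood : ∀ B : Set V, IsBlockIn G H B → HasEdgeIn G B → P B ∧ B.ncard ≤ d)
    (k : ℕ) :
    (∃ S : Set V, S.ncard ≤ k ∧
        ∀ B : Set V, IsBlockIn G Sᶜ B → HasEdgeIn G B → P B ∧ B.ncard ≤ d) ↔
      (∃ S : Set V, S ⊆ Hᶜ ∧ S.ncard ≤ k ∧
        ∀ B : Set V, IsBlockIn G (Hᶜ \ S) B → HasEdgeIn G B → P B ∧ B.ncard ≤ d) := by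
  constructor
  · rintro ⟨S, hSk, hS⟩
    refine ⟨S \ H, fun x hx => hx.2, le_trans (Set.ncard_le_ncard Set.diff_subset (Set.toFinite S)) hSk, ?_⟩
    have hset : Hᶜ \ (S \ H) = Hᶜ \ S := by
      ext x; simp only [Set.mem_diff, Set.mem_compl_iff]; tauto
    rw [hset]
    intro B hB hBe
    refine hS B ⟨fun x hx => (hB.1 hx).2, hB.2.1, ?_⟩ hBe
    intro C hBC hCS hC
    obtain ⟨u, hu, -, -, -⟩ := id hBe
    have huH : u ∉ H := (hB.1 hu).1
    have hCH : C ⊆ Hᶜ := by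
      intro v hv hvH
      exact huH (mem_of_connOn G H hHcomp C hC.1 ⟨v, hv⟩ ⟨u, hBC hu⟩ hvH)
    exact hB.2.2 C hBC (fun x hx => ⟨hCH hx, hCS hx⟩) hC
  · rintro ⟨S, hSH, hSk, hS⟩
    refine ⟨S, hSk, ?_⟩
    intro B hB hBe
    obtain ⟨u, hu, -, -, -⟩ := id hBe
    have hHS : H ⊆ Sᶜ := fun x hx hxS => hSH hxS hx
    by_cases huH : u ∈ H
    · have hBH : B ⊆ H := fun v hv =>
        mem_of_connOn G H hHcomp B hB.2.1.1 ⟨u, hu⟩ ⟨v, hv⟩ huH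
      refine hHgood B ⟨hBH, hB.2.1, ?_⟩ hBe
      intro C hBC hCH hC
      exact hB.2.2 C hBC (fun x hx => hHS (hCH hx)) hC
    · have hBH : B ⊆ Hᶜ := fun v hv hvH =>
        huH (mem_of_connOn G H hHcomp B hB.2.1.1 ⟨v, hv⟩ ⟨u, hu⟩ hvH)
      refine hS B ⟨fun x hx => ⟨hBH hx, hB.1 hx⟩, hB.2.1, ?_⟩ hBe
      intro C hBC hCS hC
      exact hB.2.2 C hBC (fun x hx => (hCS hx).2) hC
end
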